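/- Over ℂ, let A be the 2×4 matrix with rows (1, 0, 0, 0) and (0, −1, 0, 0) (this is A₄(1,−1)). Then A is not associative, i.e. A·(A ⊗ I₂) ≠ A·(I₂ ⊗ A), yet the 3-algebra it generates, T(A) = A·(I₂ ⊗ A), which equals the 2×8 matrix with rows (1, 0, 0, 0, 0, 0, 0, 0) and (0, 1, 0, 0, 0, 0, 0, 0), is totally associative. Thus a totally associative 3-algebra can be generated by a non-associative algebra. -/

import Mathlib

open Matrix Kronecker

/-- Kronecker product of `Fin`-indexed matrices, with row/column blocks ordered
lexicographically via `finProdFinEquiv`: for 2x2-block factors the columns of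
`kron A B` appear in the order (1,1),(1,2),(2,1),(2,2). -/
def kron {F : Type*} [Mul F] {a b c d : ℕ}
    (A : Matrix (Fin a) (Fin b) F) (B : Matrix (Fin c) (Fin d) F) :
    Matrix (Fin (a * c)) (Fin (b * d)) F :=
  Matrix.reindex finProdFinEquiv finProdFinEquiv (A ⊗ₖ B)

/-- MSC of the ternary multiplication f(x,y,z) = x·(y·z) generated by the binary
algebra with MSC `A`, namely T(A) = A·(I₂ ⊗ A), a 2×8 matrix. -/
def T {F : Type*} [Field F] (A : Matrix (Fin 2) (Fin 4) F) : Matrix (Fin 2) (Fin 8) F :=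
  A * kron (1 : Matrix (Fin 2) (Fin 2) F) A

/-- A 2×8 MSC `B` is totally associative if
B·(B ⊗ I₂ ⊗ I₂) = B·(I₂ ⊗ B ⊗ I₂) = B·(I₂ ⊗ I₂ ⊗ B). -/
def TotAssoc (B : Matrix (Fin 2) (Fin 8) ℂ) : Prop :=
  B * kron (kron B (1 : Matrix (Fin 2) (Fin 2) ℂ)) (1 : Matrix (Fin 2) (Fin 2) ℂ) =
      B * kron (kron (1 : Matrix (Fin 2) (Fin 2) ℂ) B) (1 : Matrix (Fin 2) (Fin 2) ℂ) ∧
    B * kron (kron (1 : Matrix (Fin 2) (Fin 2) ℂ) B) (1 : Matrix (Fin 2) (Fin 2) ℂ) =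
      B * kron (kron (1 : Matrix (Fin 2) (Fin 2) ℂ) (1 : Matrix (Fin 2) (Fin 2) ℂ)) B

/-!
In A₄(1,−1) the basis vector e₁ is an idempotent with e₁e₂ = −e₂ and all other products vanish,
so (e₁e₁)e₂ = −e₂ while e₁(e₁e₂) = e₂. In x(yz) the sign occurs twice and cancels: the generated
ternary product is (x, y, z) ↦ x₁y₁z, and all three bracketings of a fivefold product equal
x₁y₁z₁u₁v.
-/

theorem kron_apply {α : Type*} [Mul α] {a b c d : ℕ}
    (A : Matrix (Fin a) (Fin b) α) (B : Matrix (Fin c) (Fin d) α)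
    (i : Fin (a * c)) (j : Fin (b * d)) :
    kron A B i j = A i.divNat j.divNat * B i.modNat j.modNat :=
  rfl

def mscA4 (R : Type*) [Ring R] : Matrix (Fin 2) (Fin 4) R :=
  !![1, 0, 0, 0; 0, -1, 0, 0]

def mscTA4 (R : Type*) [Semiring R] : Matrix (Fin 2) (Fin 8) R :=
  !![1, 0, 0, 0, 0, 0, 0, 0; 0, 1, 0, 0, 0, 0, 0, 0]

local notation "I₂" => (1 : Matrix (Fin 2) (Fin 2) _)

theorem mscA4_not_assoc {R : Type*} [Ring R] (h2 : (2 : R) ≠ 0) :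
    mscA4 R * kron (mscA4 R) I₂ ≠ mscA4 R * kron I₂ (mscA4 R) := by
  intro h
  have h_entry : (-1 : R) = 1 := by
    simpa [mscA4, Matrix.mul_apply, Fin.sum_univ_succ, kron_apply, Matrix.one_apply,
      Fin.divNat, Fin.modNat] using congrFun (congrFun h 1) 1
  exact h2 (by rw [← one_add_one_eq_two]; exact neg_eq_iff_add_eq_zero.mp h_entry)

theorem T_mscA4 (F : Type*) [Field F] : T (mscA4 F) = mscTA4 F := by
  ext i j
  fin_cases i <;> fin_cases j <;>
    simp [T, mscA4, mscTA4, Matrix.mul_apply, Fin.sum_univ_succ, kron_apply, Matrix.one_apply,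
      Fin.divNat, Fin.modNat]

theorem mscTA4_mul {R : Type*} [Semiring R] {n : Type*} (M : Matrix (Fin 8) n R) :
    mscTA4 R * M = M.submatrix (Fin.castLE (by norm_num)) id := by
  ext i j
  fin_cases i <;> simp [mscTA4, Matrix.mul_apply, Fin.sum_univ_succ]

theorem mscTA4_totally_assoc {R : Type*} [Semiring R] :
    mscTA4 R * kron (kron (mscTA4 R) I₂) I₂ = mscTA4 R * kron (kron I₂ (mscTA4 R)) I₂ ∧
      mscTA4 R * kron (kron I₂ (mscTA4 R)) I₂ = mscTA4 R * kron (kron I₂ I₂) (mscTA4 R) := by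
  -- the first two rows of each of the three Kronecker products are e₁ᵀ ⊗ e₁ᵀ ⊗ e₁ᵀ ⊗ e₁ᵀ ⊗ I₂
  rw [mscTA4_mul, mscTA4_mul, mscTA4_mul]
  constructor <;> ext i j <;> fin_cases i <;> fin_cases j <;>
    simp [mscTA4, kron_apply, Matrix.one_apply, Fin.divNat, Fin.modNat]

/-- A = A₄(1,−1) is not associative as a binary algebra, yet the 3-algebra
it generates, T(A), is totally associative (and equals the stated 2×8 matrix).
Thus a totally associative 3-algebra can be generated by a non-associative
algebra. -/
theorem nonassoc_gives_totAssoc_A4_one :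
    !![(1 : ℂ), 0, 0, 0;
         0, -1, 0, 0] * kron !![(1 : ℂ), 0, 0, 0;
         0, -1, 0, 0] (1 : Matrix (Fin 2) (Fin 2) ℂ) ≠
        !![(1 : ℂ), 0, 0, 0;
         0, -1, 0, 0] * kron (1 : Matrix (Fin 2) (Fin 2) ℂ) !![(1 : ℂ), 0, 0, 0;
         0, -1, 0, 0] ∧
      T !![(1 : ℂ), 0, 0, 0;
         0, -1, 0, 0] = !![(1 : ℂ), 0, 0, 0, 0, 0, 0, 0;
         0, 1, 0, 0, 0, 0, 0, 0] ∧
      TotAssoc (T !![(1 : ℂ), 0, 0, 0;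
         0, -1, 0, 0]) := by
  refine ⟨mscA4_not_assoc two_ne_zero, T_mscA4 ℂ, ?_⟩
  show TotAssoc (T (mscA4 ℂ))
  rw [T_mscA4]
  exact mscTA4_totally_assoc
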